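/- Let i, k, r, s be positive integers with k > i, and let n ≥ k(1+i) - i - 1 be an integer. Then L^i_{r,s}(k,n) = k·s·r^{k-1}·F^i_{r,s}(k, n-(1+i)k+i) + r^k·F^i_{r,s}(k, n-ki). -/
import Mathlib


/-- Auxiliary sequence: `genFibAux i k r s m` equals `F^i_{r,s}(k, m-1)`, i.e. the
four-parameters sequence indexed by `m = n + 1 ≥ 0`.  For `i ≤ k` the initial values
(`-1 ≤ n ≤ k-2`, i.e. `m < k`) are `r^⌊(n+1)/i⌋`, for `k < i` (`m < i`) they are
`s^⌊(n+1)/k⌋`, and for `n ≥ max{k,i} - 1` the recurrence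
`F(n) = r·F(n-i) + s·F(n-k)` holds. -/
def genFibAux (i k r s : ℕ) : ℕ → ℤ
  | m =>
    if m < max (max k i) 1 then
      if i ≤ k then (r : ℤ) ^ (m / i) else (s : ℤ) ^ (m / k)
    else
      r * genFibAux i k r s (m - max i 1) + s * genFibAux i k r s (m - max k 1)
  termination_by m => m
  decreasing_by all_goals omega

/-- The four-parameters sequence `F^i_{r,s}(k,n)` for integer `n ≥ -1`, with the
convention that it vanishes for `n ≤ -2`. -/
def genFib (i k r s : ℕ) (n : ℤ) : ℤ :=
  if n < -1 then 0 else genFibAux i k r s (n + 1).toNat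

/-- The generalized Lucas sequence `L^i_{r,s}(k,n)` (for `k > i`):
`L(n) = F(n)` for `-1 ≤ n ≤ k-2`,
`L(n) = F(n) - r^⌊(n+1)/i⌋` for `k-1 ≤ n ≤ k+(k-1)i-2`, and
`L(n) = r^(k-1)·((k-1)·s·F(n-k-(k-1)i) + F(n-(k-1)i))` for `n ≥ k+(k-1)i-1`. -/
def genLucas (i k r s : ℕ) (n : ℤ) : ℤ :=
  if n ≤ (k : ℤ) - 2 then genFib i k r s n
  else if n ≤ (k : ℤ) + ((k : ℤ) - 1) * i - 2 then
    genFib i k r s n - (r : ℤ) ^ ((n + 1).toNat / i)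
  else
    (r : ℤ) ^ (k - 1) *
      (((k : ℤ) - 1) * s * genFib i k r s (n - k - ((k : ℤ) - 1) * i) +
        genFib i k r s (n - ((k : ℤ) - 1) * i))


lemma genFib_rec (i k r s : ℕ) (hi : 0 < i) (hik : i < k) (n : ℤ) (hn : (k : ℤ) - 1 ≤ n) :
    genFib i k r s n = r * genFib i k r s (n - i) + s * genFib i k r s (n - k) := by
  have hk1 : (1:ℤ) ≤ (k:ℤ) := by exact_mod_cast Nat.one_le_iff_ne_zero.mpr (by omega)
  have h0 : ¬ n < -1 := by omega
  have h1 : ¬ n - i < -1 := by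
    have : (i:ℤ) < k := by exact_mod_cast hik
    omega
  have h2 : ¬ n - k < -1 := by omega
  unfold genFib
  rw [if_neg h0, if_neg h1, if_neg h2, genFibAux]
  have hmax : max (max k i) 1 = k := by omega
  have hmi : max i 1 = i := by omega
  have hmk : max k 1 = k := by omega
  rw [hmax, hmi, hmk, if_neg (by omega : ¬ (n+1).toNat < k)]
  have hik' : (i:ℤ) < k := by exact_mod_cast hik
  rw [show (n+1).toNat - i = (n - i + 1).toNat from by omega,
      show (n+1).toNat - k = (n - k + 1).toNat from by omega]

/-- For positive integers `i, k, r, s` with `k > i` and integer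
`n ≥ k(1+i) - i - 1`,
`L^i_{r,s}(k,n) = k·s·r^{k-1}·F^i_{r,s}(k, n-(1+i)k+i) + r^k·F^i_{r,s}(k, n-ki)`. -/
theorem genLucas_eq_genFib_combination (i k r s : ℕ) (hi : 0 < i) (hik : i < k)
    (hr : 0 < r) (hs : 0 < s) (n : ℤ)
    (hn : (k : ℤ) * (1 + i) - i - 1 ≤ n) :
    genLucas i k r s n =
      (k : ℤ) * s * (r : ℤ) ^ (k - 1) *
          genFib i k r s (n - (1 + (i : ℤ)) * k + i) +
        (r : ℤ) ^ k * genFib i k r s (n - (k : ℤ) * i) := by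
  have hik' : (i:ℤ) < k := by exact_mod_cast hik
  have hi' : (1:ℤ) ≤ (i:ℤ) := by exact_mod_cast hi
  have ht : (1:ℤ) ≤ ((k:ℤ) - 1) * i := by nlinarith
  have hn' : (k:ℤ) + ((k:ℤ)-1)*i - 1 ≤ n := by nlinarith [hn]
  unfold genLucas
  rw [if_neg (by nlinarith), if_neg (by linarith)]
  have e1 : n - k - ((k:ℤ)-1)*i = (n - ((k:ℤ)-1)*i) - k := by ring
  have e2 : n - (1+(i:ℤ))*k + i = (n - ((k:ℤ)-1)*i) - k := by ring
  have e3 : n - (k:ℤ)*i = (n - ((k:ℤ)-1)*i) - i := by ring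
  rw [e1, e2, e3, genFib_rec i k r s hi hik (n - ((k:ℤ)-1)*i) (by linarith)]
  rw [show (r:ℤ)^k = (r:ℤ)^(k-1)*r from by rw [← pow_succ]; congr 1; omega]
  ring
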